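/- Let A be a finite automaton with transition set δ such that Run(A) is a bounded language. Let π₁, π₂ ∈ δ⁺ be nonempty cycles of A based at a common state, and let X, Y ⊆ δ* be languages such that X π₁* π₂* Y ⊆ Run(A). Then there exists a nonempty cycle π of A at that same state such that X π₁* π₂* Y ⊆ X π* Y ⊆ Run(A). -/

import Mathlib

open scoped Classical

noncomputable section

/-! ### Basic word and language notions -/

/-- Number of occurrences of `b` in the list `l`. -/
def countOcc {β : Type} (l : List β) (b : β) : ℕ :=
  (l.filter fun s => decide (s = b)).length

/-- `wpow w k` is the word `w` concatenated with itself `k` times. -/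
def wpow {β : Type} (w : List β) : ℕ → List β
  | 0 => []
  | k + 1 => w ++ wpow w k

/-- The word `w₁^{k₁} ⋯ wₙ^{kₙ}`. -/
def socProd {β : Type} {n : ℕ} (w : Fin n → List β) (k : Fin n → ℕ) : List β :=
  (List.ofFn fun i => wpow (w i) (k i)).flatten

/-- `w₁, …, wₙ` is a socle of `L`: the `wᵢ` are nonempty and `L ⊆ w₁* ⋯ wₙ*`. -/
def IsSocle {β : Type} {n : ℕ} (L : Set (List β)) (w : Fin n → List β) : Prop :=
  (∀ i, w i ≠ []) ∧ ∀ x ∈ L, ∃ k : Fin n → ℕ, x = socProd w k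

/-- A language is bounded if it has a socle. -/
def BoundedLang {β : Type} (L : Set (List β)) : Prop :=
  ∃ (n : ℕ) (w : Fin n → List β), 0 < n ∧ IsSocle L w

/-- The iteration set of `L` w.r.t. the socle `w`. -/
def IterSet {β : Type} {n : ℕ} (L : Set (List β)) (w : Fin n → List β) :
    Set (Fin n → ℕ) :=
  {k | socProd w k ∈ L}

/-- Concatenation of two languages. -/
def catLang {β : Type} (X Y : Set (List β)) : Set (List β) :=
  {w | ∃ x ∈ X, ∃ y ∈ Y, w = x ++ y}

/-- The language `z* = {z^k | k ∈ ℕ}` of powers of a single word. -/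
def starWord {β : Type} (z : List β) : Set (List β) :=
  {w | ∃ k : ℕ, w = wpow z k}

/-- Kleene star of a language. -/
def starLang {β : Type} (K : Set (List β)) : Set (List β) :=
  {w | ∃ l : List (List β), (∀ u ∈ l, u ∈ K) ∧ w = l.flatten}

/-! ### Semilinear sets -/

/-- `C ⊆ ℕ^ι` is linear: `C = c + P*` for a finite `P`. -/
def StmtIsLinearSet {ι : Type} (C : Set (ι → ℕ)) : Prop :=
  ∃ (c : ι → ℕ) (P : Set (ι → ℕ)), P.Finite ∧
    C = {x | ∃ p ∈ AddSubmonoid.closure P, x = c + p}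

/-- `C ⊆ ℕ^ι` is semilinear: a finite union of linear sets. -/
def StmtIsSemilinearSet {ι : Type} (C : Set (ι → ℕ)) : Prop :=
  ∃ S : Set (Set (ι → ℕ)), S.Finite ∧ (∀ D ∈ S, StmtIsLinearSet D) ∧ C = ⋃₀ S

/-- `L` is a bounded semilinear language: it has a socle whose iteration set is
semilinear. -/
def InBSL {β : Type} (L : Set (List β)) : Prop :=
  ∃ (n : ℕ) (w : Fin n → List β), 0 < n ∧ IsSocle L w ∧ StmtIsSemilinearSet (IterSet L w)

/-! ### Finite automata, paths, runs -/

/-- A (nondeterministic) finite automaton with a single initial state, a set of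
final states and a finite set of transitions. -/
structure FinAut (α : Type) where
  σ : Type
  [finσ : Fintype σ]
  init : σ
  accept : Set σ
  δ : Set (σ × α × σ)
  finδ : δ.Finite

namespace FinAut

variable {α : Type}

/-- The type of transitions of `A`. -/
def Trans (A : FinAut α) : Type := {t : A.σ × α × A.σ // t ∈ A.δ}

def src {A : FinAut α} (t : A.Trans) : A.σ := t.1.1
def lbl {A : FinAut α} (t : A.Trans) : α := t.1.2.1
def tgt {A : FinAut α} (t : A.Trans) : A.σ := t.1.2.2

/-- `A.Steps q π r` holds when `π` is a path from state `q` to state `r`. -/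
inductive Steps (A : FinAut α) : A.σ → List A.Trans → A.σ → Prop
  | nil (q : A.σ) : Steps A q [] q
  | cons {q r : A.σ} {t : A.Trans} {π : List A.Trans} :
      src t = q → Steps A (tgt t) π r → Steps A q (t :: π) r

/-- The set of accepting paths of `A`, as a language over the transition set. -/
def Run (A : FinAut α) : Set (List A.Trans) :=
  {π | ∃ f ∈ A.accept, A.Steps A.init π f}

/-- The language of `A`: labels of accepting paths. -/
def lang (A : FinAut α) : Set (List α) :=
  {w | ∃ π ∈ A.Run, w = π.map lbl}

/-- `A` is deterministic. -/
def Deterministic (A : FinAut α) : Prop :=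
  ∀ ⦃p : A.σ⦄ ⦃a : α⦄ ⦃q q' : A.σ⦄, (p, a, q) ∈ A.δ → (p, a, q') ∈ A.δ → q = q'

/-- The Parikh image of a path: how many times each transition occurs. -/
def pathCount {A : FinAut α} (π : List A.Trans) : A.Trans → ℕ :=
  fun t => countOcc π t

/-- `A` is flat: it consists of a spine of states `q 0, …, q n` (`q 0` initial,
`q n` final, exactly one transition from `q i` to `q (i+1)` given by the label
`sl i`), together with, for at most one pair `lo k ≤ hi k` each, a back-path of
fresh states from `q (hi k)` to `q (lo k)`; the endpoints of distinct
back-paths are not strictly inside one another (no nested loops). -/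
def Flat (A : FinAut α) : Prop :=
  ∃ (n : ℕ) (q : Fin (n + 1) → A.σ) (sl : Fin n → α) (m : ℕ)
    (lo hi : Fin m → Fin (n + 1)) (fresh : Fin m → List A.σ) (bl : Fin m → List α),
    Function.Injective q ∧
    A.init = q 0 ∧
    A.accept = {q (Fin.last n)} ∧
    (∀ k, lo k ≤ hi k) ∧
    (∀ k k', k ≠ k' → (lo k, hi k) ≠ (lo k', hi k')) ∧
    (∀ k k', k ≠ k' →
      ¬(lo k < lo k' ∧ lo k' < hi k) ∧ ¬(lo k < hi k' ∧ hi k' < hi k)) ∧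
    (∀ k, (fresh k).Nodup) ∧
    (∀ k i, q i ∉ fresh k) ∧
    (∀ k k', k ≠ k' → ∀ s ∈ fresh k, s ∉ fresh k') ∧
    (∀ s : A.σ, (∃ i, s = q i) ∨ ∃ k, s ∈ fresh k) ∧
    (∀ k, (bl k).length = (fresh k).length + 1) ∧
    A.δ = {t | (∃ i : Fin n, t = (q i.castSucc, sl i, q i.succ)) ∨
        (∃ (k : Fin m) (j : ℕ) (s s' : A.σ) (a : α),
          (q (hi k) :: (fresh k ++ [q (lo k)]))[j]? = some s ∧
          (bl k)[j]? = some a ∧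
          (q (hi k) :: (fresh k ++ [q (lo k)]))[j + 1]? = some s' ∧
          t = (s, a, s'))}

end FinAut

/-! ### ε-automata -/

/-- The language of an ε-automaton (transitions labelled by `Option α`, where
`none` stands for ε): labels of accepting paths, erasing ε. -/
def epsLang {α : Type} (A : FinAut (Option α)) : Set (List α) :=
  {w | ∃ π ∈ A.Run, w = π.filterMap FinAut.lbl}

/-! ### Constrained automata -/

/-- The language of the constrained automaton `(A, C)`. -/
def CALang {α : Type} (A : FinAut α) (C : Set (A.Trans → ℕ)) : Set (List α) :=
  {w | ∃ π ∈ A.Run, FinAut.pathCount π ∈ C ∧ w = π.map FinAut.lbl}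

/-- The language of the ε-constrained automaton `(A, C)`. -/
def EpsCALang {α : Type} (A : FinAut (Option α)) (C : Set (A.Trans → ℕ)) :
    Set (List α) :=
  {w | ∃ π ∈ A.Run, FinAut.pathCount π ∈ C ∧ w = π.filterMap FinAut.lbl}

def RecByCA {α : Type} (L : Set (List α)) : Prop :=
  ∃ (A : FinAut α) (C : Set (A.Trans → ℕ)), StmtIsSemilinearSet C ∧ CALang A C = L

def RecByDetCA {α : Type} (L : Set (List α)) : Prop :=
  ∃ (A : FinAut α) (C : Set (A.Trans → ℕ)),
    A.Deterministic ∧ StmtIsSemilinearSet C ∧ CALang A C = L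

def RecByEpsCA {α : Type} (L : Set (List α)) : Prop :=
  ∃ (A : FinAut (Option α)) (C : Set (A.Trans → ℕ)),
    StmtIsSemilinearSet C ∧ EpsCALang A C = L

/-- `L` is a finite union of languages of flat deterministic constrained
automata. -/
def FlatDetCAUnion {α : Type} (L : Set (List α)) : Prop :=
  ∃ (m : ℕ) (A : Fin m → FinAut α) (C : ∀ b, Set ((A b).Trans → ℕ)),
    (∀ b, (A b).Flat) ∧ (∀ b, (A b).Deterministic) ∧
    (∀ b, StmtIsSemilinearSet (C b)) ∧ L = ⋃ b, CALang (A b) (C b)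

/-! ### Parikh automata -/

/-- Projection of a word over `Σ × ℕ^d` on `Σ`. -/
def PsiW {α : Type} {d : ℕ} (ω : List (α × (Fin d → ℕ))) : List α :=
  ω.map Prod.fst

/-- Extended Parikh image: the sum of the vector components. -/
def PhiTilde {α : Type} {d : ℕ} (ω : List (α × (Fin d → ℕ))) : Fin d → ℕ :=
  (ω.map Prod.snd).sum

/-- The language of the Parikh automaton `(A, C)`.  (Note that the set `D` of
vectors appearing on transitions of `A` is automatically finite, since the
transition set of `A` is finite.) -/
def PALang {α : Type} {d : ℕ} (A : FinAut (α × (Fin d → ℕ))) (C : Set (Fin d → ℕ)) :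
    Set (List α) :=
  {w | ∃ ω ∈ A.lang, PhiTilde ω ∈ C ∧ w = PsiW ω}

/-- Determinism for Parikh automata: at most one pair `(v, q')` for each state
`q` and letter `a`. -/
def PADet {α : Type} {d : ℕ} (A : FinAut (α × (Fin d → ℕ))) : Prop :=
  ∀ ⦃p : A.σ⦄ ⦃a : α⦄ ⦃v v' : Fin d → ℕ⦄ ⦃q q' : A.σ⦄,
    (p, (a, v), q) ∈ A.δ → (p, (a, v'), q') ∈ A.δ → v = v' ∧ q = q'

def RecByPA {α : Type} (L : Set (List α)) : Prop :=
  ∃ (d : ℕ) (A : FinAut (α × (Fin d → ℕ))) (C : Set (Fin d → ℕ)),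
    StmtIsSemilinearSet C ∧ PALang A C = L

def RecByDetPA {α : Type} (L : Set (List α)) : Prop :=
  ∃ (d : ℕ) (A : FinAut (α × (Fin d → ℕ))) (C : Set (Fin d → ℕ)),
    PADet A ∧ StmtIsSemilinearSet C ∧ PALang A C = L

/-! ### Affine Parikh automata -/

/-- Apply the affine functions `x ↦ M t * x + v t` of the transitions of a path,
in order (first transition first). -/
def pathApply {α : Type} {d : ℕ} (A : FinAut α) (M : A.Trans → Matrix (Fin d) (Fin d) ℕ)
    (v : A.Trans → Fin d → ℕ) : List A.Trans → (Fin d → ℕ) → (Fin d → ℕ)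
  | [], x => x
  | t :: π, x => pathApply A M v π ((M t).mulVec x + v t)

/-- The language of the affine Parikh automaton `(A, U, C)`, where the affine
function attached to transition `t` is `x ↦ M t * x + v t`. -/
def APALang {α : Type} {d : ℕ} (A : FinAut α) (M : A.Trans → Matrix (Fin d) (Fin d) ℕ)
    (v : A.Trans → Fin d → ℕ) (C : Set (Fin d → ℕ)) : Set (List α) :=
  {w | ∃ π ∈ A.Run, pathApply A M v π 0 ∈ C ∧ w = π.map FinAut.lbl}

/-- The monoid of the APA: the multiplicative matrix monoid generated by the
matrices of the transitions. -/
def APAMonoid {α : Type} {d : ℕ} (A : FinAut α) (M : A.Trans → Matrix (Fin d) (Fin d) ℕ) :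
    Set (Matrix (Fin d) (Fin d) ℕ) :=
  (Submonoid.closure (Set.range M) : Submonoid (Matrix (Fin d) (Fin d) ℕ))

/-! ### Semilinear regular expressions -/

/-- The language `y₀ x₁* y₁ ⋯ xₙ* yₙ` of a branch of an SLRE. -/
def branchLang {β : Type} {n : ℕ} (y : Fin (n + 1) → List β) (x : Fin n → List β) :
    Set (List β) :=
  {w | ∃ k : Fin n → ℕ,
    w = y 0 ++ (List.ofFn fun i : Fin n => wpow (x i) (k i) ++ y i.succ).flatten}

end

/-!
Two nonempty cycles `π₁, π₂` at `q` that can be iterated in a run must commute: otherwise the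
`2 ^ m` words `x g₁ ⋯ gₘ y` with `gᵢ ∈ {π₁π₂, π₂π₁}` are distinct runs of the same length
`N = O(m)`, while a language inside `w₁* ⋯ wₙ*` has at most `(N + 1) ^ n` words of length `N`.
Commuting words are powers of a common word `ρ`, which is again a cycle at `q`, and
`π₁^i π₂^j = ρ^(a i + b j)`.
-/

section Words

variable {β : Type}

lemma wpow_one (w : List β) : wpow w 1 = w := by simp [wpow]

lemma wpow_add (w : List β) (a b : ℕ) : wpow w a ++ wpow w b = wpow w (a + b) := by
  induction a with
  | zero => simp [wpow]
  | succ a ih => simp [wpow, Nat.succ_add, ih]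

lemma wpow_mul (w : List β) (a b : ℕ) : wpow (wpow w a) b = wpow w (a * b) := by
  induction b with
  | zero => simp [wpow]
  | succ b ih => rw [wpow, ih, wpow_add, Nat.mul_succ, Nat.add_comm]

lemma length_wpow (w : List β) (k : ℕ) : (wpow w k).length = k * w.length := by
  induction k with
  | zero => simp [wpow]
  | succ k ih => simp [wpow, ih, Nat.succ_mul, Nat.add_comm]

lemma wpow_ne_nil_iff {w : List β} {k : ℕ} : wpow w k ≠ [] ↔ w ≠ [] ∧ k ≠ 0 := by
  rw [Ne, ← List.length_eq_zero_iff, length_wpow, Nat.mul_eq_zero, List.length_eq_zero_iff]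
  tauto

lemma catLang_starWord_wpow_subset (X Y : Set (List β)) (ρ : List β) (a b : ℕ) :
    catLang X (catLang (starWord (wpow ρ a)) (catLang (starWord (wpow ρ b)) Y)) ⊆
      catLang X (catLang (starWord ρ) Y) := by
  rintro _ ⟨x, hx, _, ⟨_, ⟨i, rfl⟩, _, ⟨_, ⟨j, rfl⟩, y, hy, rfl⟩, rfl⟩, rfl⟩
  refine ⟨x, hx, _, ⟨_, ⟨a * i + b * j, rfl⟩, y, hy, rfl⟩, ?_⟩
  simp only [wpow_mul, ← wpow_add, List.append_assoc]

lemma length_socProd {n : ℕ} (w : Fin n → List β) (k : Fin n → ℕ) :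
    (socProd w k).length = ∑ i, k i * (w i).length := by
  simp [socProd, List.length_flatten, List.sum_ofFn, length_wpow]

lemma exists_wpow_of_append_comm {u v : List β} (h : u ++ v = v ++ u) :
    ∃ ρ k l, u = wpow ρ k ∧ v = wpow ρ l := by
  induction hn : u.length + v.length using Nat.strong_induction_on generalizing u v with
  | _ n ih =>
  wlog huv : u.length ≤ v.length generalizing u v
  · obtain ⟨ρ, k, l, hu, hv⟩ := this h.symm (by omega) (by omega)
    exact ⟨ρ, l, k, hv, hu⟩
  rcases eq_or_ne u [] with rfl | hu
  · exact ⟨v, 0, 1, rfl, (wpow_one v).symm⟩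
  obtain ⟨v', rfl⟩ : u <+: v :=
    List.prefix_of_prefix_length_le (h ▸ List.prefix_append u v) (List.prefix_append v u) huv
  have h' : u ++ v' = v' ++ u := by simpa using h
  have hlen : u.length + v'.length < n := by
    simp only [← hn, List.length_append]
    have := List.length_pos_iff.2 hu
    omega
  obtain ⟨ρ, k, l, rfl, rfl⟩ := ih _ hlen h' rfl
  exact ⟨ρ, k, k + l, rfl, wpow_add ρ k l⟩

lemma flatten_inj_of_forall_length_eq {ℓ : ℕ} {L₁ L₂ : List (List β)}
    (h₁ : ∀ w ∈ L₁, w.length = ℓ) (h₂ : ∀ w ∈ L₂, w.length = ℓ)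
    (hl : L₁.length = L₂.length) (h : L₁.flatten = L₂.flatten) : L₁ = L₂ := by
  induction L₁ generalizing L₂ with
  | nil => exact (List.length_eq_zero_iff.1 hl.symm).symm
  | cons a L₁ ih =>
    obtain ⟨b, L₂, rfl⟩ := List.exists_cons_of_length_eq_add_one hl.symm
    obtain ⟨rfl, ht⟩ := List.append_inj h (by rw [h₁ a (by simp), h₂ b (by simp)])
    rw [ih (fun w hw ↦ h₁ w (by simp [hw])) (fun w hw ↦ h₂ w (by simp [hw]))
      (by simpa using hl) ht]

lemma injective_flatten_ofFn {γ : Type} {g : γ → List β} {ℓ : ℕ} (hg : Function.Injective g)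
    (hℓ : ∀ c, (g c).length = ℓ) (m : ℕ) :
    Function.Injective fun s : Fin m → γ ↦ (List.ofFn (g ∘ s)).flatten := by
  intro s t h
  refine hg.comp_left <| List.ofFn_injective <|
    flatten_inj_of_forall_length_eq (ℓ := ℓ) ?_ ?_ ?_ h <;> simp [hℓ]

lemma exists_pow_lt_two_pow (a b n : ℕ) : ∃ m, (a + b * m) ^ n < 2 ^ m := by
  obtain ⟨s, hs⟩ : ∃ s, s = ((a + b + 1) * (n + 1)) ^ n := ⟨_, rfl⟩
  have hs1 : 1 ≤ s := hs ▸ Nat.one_le_pow _ _ (by positivity)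
  refine ⟨(n + 1) * s, ?_⟩
  calc (a + b * ((n + 1) * s)) ^ n ≤ ((a + b + 1) * (n + 1) * s) ^ n := by
        have hM : 1 ≤ (n + 1) * s := by nlinarith
        gcongr
        nlinarith [Nat.le_mul_of_pos_right a hM]
    _ = s * s ^ n := by rw [mul_pow, ← hs]
    _ < 2 ^ s * (2 ^ s) ^ n :=
        Nat.mul_lt_mul_of_lt_of_le s.lt_two_pow_self
          (Nat.pow_le_pow_left s.lt_two_pow_self.le n) (by positivity)
    _ = 2 ^ ((n + 1) * s) := by ring

lemma IsSocle.card_le_of_injective {L : Set (List β)} {n : ℕ} {w : Fin n → List β}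
    (hw : IsSocle L w) {ι : Type} [Finite ι] {F : ι → List β} (hF : Function.Injective F)
    (hFL : ∀ i, F i ∈ L) {N : ℕ} (hN : ∀ i, (F i).length = N) :
    Nat.card ι ≤ (N + 1) ^ n := by
  have hk : ∀ i, ∃ k : Fin n → Fin (N + 1), F i = socProd w fun j ↦ k j := by
    intro i
    obtain ⟨k, hk⟩ := hw.2 _ (hFL i)
    refine ⟨fun j ↦ ⟨k j, Nat.lt_succ_of_le ?_⟩, hk⟩
    calc k j ≤ k j * (w j).length := Nat.le_mul_of_pos_right _ (List.length_pos_iff.2 (hw.1 j))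
      _ ≤ ∑ i, k i * (w i).length :=
        Finset.single_le_sum (f := fun i ↦ k i * (w i).length) (by simp) (Finset.mem_univ j)
      _ = N := by rw [← length_socProd, ← hk, hN]
  choose k hk using hk
  have hkinj : Function.Injective k := fun i i' h ↦ hF (by rw [hk, hk, h])
  simpa using Nat.card_le_card_of_injective k hkinj

lemma BoundedLang.append_comm {L : Set (List β)} (hL : BoundedLang L) {x y u v : List β}
    (h : ∀ z ∈ starLang {u ++ v, v ++ u}, x ++ (z ++ y) ∈ L) : u ++ v = v ++ u := by
  by_contra hne
  obtain ⟨n, w, -, hw⟩ := hL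
  let g : Bool → List β := fun b ↦ bif b then u ++ v else v ++ u
  have hg : Function.Injective g := by
    intro b b' hb
    cases b <;> cases b' <;> simp_all [g, eq_comm]
  have hℓ : ∀ b, (g b).length = u.length + v.length := by
    intro b; cases b <;> simp [g, Nat.add_comm]
  obtain ⟨m, hm⟩ := exists_pow_lt_two_pow (x.length + y.length + 1) (u.length + v.length) n
  let F : (Fin m → Bool) → List β := fun s ↦ x ++ ((List.ofFn (g ∘ s)).flatten ++ y)
  have hF : Function.Injective F := fun s t hst ↦
    injective_flatten_ofFn hg hℓ m (List.append_cancel_right (List.append_cancel_left hst))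
  have hFL : ∀ s, F s ∈ L := by
    refine fun s ↦ h _ ⟨_, fun z hz ↦ ?_, rfl⟩
    obtain ⟨i, rfl⟩ := List.mem_ofFn.1 hz
    simp only [Function.comp_apply, g]
    cases s i <;> simp
  have hFN : ∀ s, (F s).length = x.length + y.length + (u.length + v.length) * m := by
    intro s
    simp only [F, List.length_append, List.length_flatten, List.map_ofFn, List.sum_ofFn,
      Function.comp_apply, hℓ, Finset.sum_const, Finset.card_univ, Fintype.card_fin, smul_eq_mul]
    ring
  have := hw.card_le_of_injective hF hFL hFN
  rw [Nat.card_fun] at this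
  simp only [Nat.card_eq_fintype_card, Fintype.card_bool, Fintype.card_fin] at this
  rw [show x.length + y.length + (u.length + v.length) * m + 1 =
    x.length + y.length + 1 + (u.length + v.length) * m by ring] at this
  omega

end Words

namespace FinAut.Steps

variable {α : Type} {A : FinAut α}

lemma append {p r s : A.σ} {a b : List A.Trans} (ha : A.Steps p a r) (hb : A.Steps r b s) :
    A.Steps p (a ++ b) s := by
  induction ha with
  | nil => exact hb
  | cons h _ ih => exact .cons h (ih hb)

lemma of_append {p s : A.σ} {a b : List A.Trans} (h : A.Steps p (a ++ b) s) :
    ∃ r, A.Steps p a r ∧ A.Steps r b s := by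
  induction a generalizing p with
  | nil => exact ⟨p, .nil p, h⟩
  | cons t a ih =>
    cases h with
    | cons hsrc h =>
      obtain ⟨r, ha, hb⟩ := ih h
      exact ⟨r, .cons hsrc ha, hb⟩

lemma wpow {q : A.σ} {w : List A.Trans} (h : A.Steps q w q) (k : ℕ) :
    A.Steps q (_root_.wpow w k) q := by
  induction k with
  | zero => exact .nil q
  | succ k ih => exact h.append ih

lemma flatten {q : A.σ} {L : List (List A.Trans)} (h : ∀ w ∈ L, A.Steps q w q) :
    A.Steps q L.flatten q := by
  induction L with
  | nil => exact .nil q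
  | cons w L ih =>
    exact (h w (by simp)).append (ih fun w' hw' ↦ h w' (by simp [hw']))

lemma tgt_unique {p r r' : A.σ} {l : List A.Trans} (h : A.Steps p l r) (h' : A.Steps p l r') :
    r = r' := by
  induction h with
  | nil => cases h'; rfl
  | cons _ _ ih => cases h' with | cons _ h' => exact ih h'

lemma src_unique {p p' r r' : A.σ} {l : List A.Trans} (hl : l ≠ []) (h : A.Steps p l r)
    (h' : A.Steps p' l r') : p = p' := by
  cases h with
  | nil => exact absurd rfl hl
  | cons hs _ => cases h' with | cons hs' _ => exact hs.symm.trans hs'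

lemma of_wpow {q : A.σ} {ρ : List A.Trans} {k : ℕ} (hρ : ρ ≠ []) (hk : k ≠ 0)
    (h : A.Steps q (_root_.wpow ρ k) q) : A.Steps q ρ q := by
  obtain ⟨k, rfl⟩ := Nat.exists_eq_succ_of_ne_zero hk
  obtain ⟨r, hρ', hrest⟩ := of_append h
  obtain rfl : r = q := by
    cases k with
    | zero => cases hrest; rfl
    | succ k =>
      obtain ⟨_, hρr, _⟩ := of_append hrest
      exact src_unique hρ hρr hρ'
  exact hρ'

end FinAut.Steps

lemma FinAut.steps_of_mem_run {α : Type} {A : FinAut α} {q r : A.σ} {x c y : List A.Trans}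
    (hc : c ≠ []) (hcq : A.Steps q c r) (hxcy : x ++ (c ++ y) ∈ A.Run) (hxy : x ++ y ∈ A.Run) :
    A.Steps A.init x q ∧ ∃ f ∈ A.accept, A.Steps q y f := by
  obtain ⟨_, _, hxcy⟩ := hxcy
  obtain ⟨p, hx, hcy⟩ := FinAut.Steps.of_append hxcy
  obtain ⟨_, hc', -⟩ := FinAut.Steps.of_append hcy
  obtain rfl : p = q := FinAut.Steps.src_unique hc hc' hcq
  obtain ⟨f, hf, hxy⟩ := hxy
  obtain ⟨p', hx', hy⟩ := FinAut.Steps.of_append hxy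
  obtain rfl : p = p' := hx.tgt_unique hx'
  exact ⟨hx, f, hf, hy⟩

theorem cycles_merge_general {α : Type} (A : FinAut α)
    (hbd : BoundedLang A.Run) (q : A.σ) (π₁ π₂ : List A.Trans)
    (h₁ : π₁ ≠ [] ∧ A.Steps q π₁ q) (h₂ : π₂ ≠ [] ∧ A.Steps q π₂ q)
    (X Y : Set (List A.Trans))
    (hsub : catLang X (catLang (starWord π₁) (catLang (starWord π₂) Y)) ⊆ A.Run) :
    ∃ π : List A.Trans, π ≠ [] ∧ A.Steps q π q ∧
      catLang X (catLang (starWord π₁) (catLang (starWord π₂) Y)) ⊆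
        catLang X (catLang (starWord π) Y) ∧
      catLang X (catLang (starWord π) Y) ⊆ A.Run := by
  rcases X.eq_empty_or_nonempty with rfl | ⟨x₀, hx₀⟩
  · exact ⟨π₁, h₁.1, h₁.2, by simp [catLang], by simp [catLang]⟩
  rcases Y.eq_empty_or_nonempty with rfl | ⟨y₀, hy₀⟩
  · exact ⟨π₁, h₁.1, h₁.2, by simp [catLang], by simp [catLang]⟩
  have hreach : ∀ x ∈ X, ∀ y ∈ Y, A.Steps A.init x q ∧ ∃ f ∈ A.accept, A.Steps q y f :=
    fun x hx y hy ↦ FinAut.steps_of_mem_run h₁.1 h₁.2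
      (hsub ⟨x, hx, π₁ ++ y,
        ⟨π₁, ⟨1, (wpow_one π₁).symm⟩, y, ⟨[], ⟨0, rfl⟩, y, hy, rfl⟩, rfl⟩, rfl⟩)
      (hsub ⟨x, hx, y, ⟨[], ⟨0, rfl⟩, y, ⟨[], ⟨0, rfl⟩, y, hy, rfl⟩, rfl⟩, rfl⟩)
  have hcomm : π₁ ++ π₂ = π₂ ++ π₁ := by
    obtain ⟨hx₀, f, hf, hy₀⟩ := hreach x₀ hx₀ y₀ hy₀
    refine hbd.append_comm fun _ ⟨ws, hws, hz⟩ ↦ ⟨f, hf, hx₀.append (.append ?_ hy₀)⟩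
    refine hz ▸ FinAut.Steps.flatten fun w hw ↦ ?_
    rcases hws w hw with rfl | rfl
    exacts [h₁.2.append h₂.2, h₂.2.append h₁.2]
  obtain ⟨ρ, a, b, rfl, rfl⟩ := exists_wpow_of_append_comm hcomm
  obtain ⟨hρ, ha⟩ := wpow_ne_nil_iff.1 h₁.1
  have hρq : A.Steps q ρ q := .of_wpow hρ ha h₁.2
  refine ⟨ρ, hρ, hρq, catLang_starWord_wpow_subset X Y ρ a b, ?_⟩
  rintro _ ⟨x, hx, _, ⟨_, ⟨k, rfl⟩, y, hy, rfl⟩, rfl⟩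
  obtain ⟨hxq, f, hf, hyf⟩ := hreach x hx y hy
  exact ⟨f, hf, hxq.append ((hρq.wpow k).append hyf)⟩

/-- If `Run(A)` is bounded, `π₁, π₂` are nonempty cycles at a
common state `q`, and `X π₁* π₂* Y ⊆ Run(A)`, then there is a nonempty cycle
`π` at `q` with `X π₁* π₂* Y ⊆ X π* Y ⊆ Run(A)`. -/
theorem cycles_merge {α : Type} [Fintype α] (A : FinAut α)
    (hbd : BoundedLang A.Run) (q : A.σ) (π₁ π₂ : List A.Trans)
    (h₁ : π₁ ≠ [] ∧ A.Steps q π₁ q) (h₂ : π₂ ≠ [] ∧ A.Steps q π₂ q)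
    (X Y : Set (List A.Trans))
    (hsub : catLang X (catLang (starWord π₁) (catLang (starWord π₂) Y)) ⊆ A.Run) :
    ∃ π : List A.Trans, π ≠ [] ∧ A.Steps q π q ∧
      catLang X (catLang (starWord π₁) (catLang (starWord π₂) Y)) ⊆
        catLang X (catLang (starWord π) Y) ∧
      catLang X (catLang (starWord π) Y) ⊆ A.Run :=
  cycles_merge_general A hbd q π₁ π₂ h₁ h₂ X Y hsub
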